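/- arXiv:1406.0026 — 2 statements merged into one kernel-verified Lean document; each statement's English description precedes it below -/
import Mathlib

section
/- Let $m = 3$, let $\mu$ be a Borel probability measure on $\mathbb{R}^n$, and suppose $\gamma = (\mathrm{Id}, T_2, T_3)_{\#}\mu$ is a probability measure on $(\mathbb{R}^n)^3$ concentrated on the graph of measurable maps $T_2, T_3 : \mathbb{R}^n \to \mathbb{R}^n$, and suppose $\gamma$ is invariant under all permutations of the three coordinates. Then $T_2(x) = T_3(x) = x$ for $\mu$-almost every $x$; that is, $\gamma = (\mathrm{Id},\mathrm{Id},\mathrm{Id})_{\#}\mu$. -/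
open MeasureTheory

theorem stmt7 {n : ℕ} (μ : Measure (Fin n → ℝ)) [IsProbabilityMeasure μ]
    (T2 T3 : (Fin n → ℝ) → (Fin n → ℝ)) (hT2 : Measurable T2) (hT3 : Measurable T3)
    (γ : Measure (Fin 3 → (Fin n → ℝ)))
    (hγ : γ = Measure.map (fun x => ![x, T2 x, T3 x]) μ)
    (hsym : ∀ σ : Equiv.Perm (Fin 3), Measure.map (fun v i => v (σ i)) γ = γ) :
    (∀ᵐ x ∂μ, T2 x = x ∧ T3 x = x) ∧
    γ = Measure.map (fun x : Fin n → ℝ => ![x, x, x]) μ := by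
  set F : (Fin n → ℝ) → (Fin 3 → (Fin n → ℝ)) := fun x => ![x, T2 x, T3 x] with hF
  have hFm : Measurable F := by
    apply measurable_pi_lambda
    intro i
    fin_cases i <;> simp [F] <;> first
      | exact measurable_id | exact hT2 | exact hT3
  -- the graph set
  set S : Set (Fin 3 → (Fin n → ℝ)) :=
    {v | v 1 = T2 (v 0) ∧ v 2 = T3 (v 0)} with hS
  have hSm : MeasurableSet S := by
    apply MeasurableSet.inter
    · exact measurableSet_eq_fun (measurable_pi_apply 1)
        (hT2.comp (measurable_pi_apply 0))
    · exact measurableSet_eq_fun (measurable_pi_apply 2)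
        (hT3.comp (measurable_pi_apply 0))
  have hpm : ∀ σ : Equiv.Perm (Fin 3),
      Measurable (fun (v : Fin 3 → (Fin n → ℝ)) i => v (σ i)) := fun σ =>
    measurable_pi_lambda _ fun i => measurable_pi_apply _
  -- key: for each σ, μ-a.e. x, (fun i => F x (σ i)) ∈ S
  have key : ∀ σ : Equiv.Perm (Fin 3), ∀ᵐ x ∂μ, (fun i => F x (σ i)) ∈ S := by
    intro σ
    have h1 : γ Sᶜ = 0 := by
      have hempty : F ⁻¹' Sᶜ = ∅ := by ext x; simp [F, S]
      rw [hγ, Measure.map_apply hFm hSm.compl, hempty, measure_empty]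
    have h2 : γ ((fun (v : Fin 3 → (Fin n → ℝ)) i => v (σ i)) ⁻¹' Sᶜ) = 0 := by
      have := hsym σ
      rw [← this, Measure.map_apply (hpm σ) hSm.compl] at h1
      exact h1
    rw [hγ, Measure.map_apply hFm ((hSm.compl).preimage (hpm σ))] at h2
    rw [ae_iff]
    have heq : {x | ¬ (fun i => F x (σ i)) ∈ S} = F ⁻¹' ((fun (v : Fin 3 → (Fin n → ℝ)) i => v (σ i)) ⁻¹' Sᶜ) := rfl
    rw [heq]; exact h2
  -- σ = swap 1 2 : T2 = T3 a.e.
  have h23 : ∀ᵐ x ∂μ, T2 x = T3 x := by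
    filter_upwards [key (Equiv.swap 1 2)] with x hx
    have h0 : (Equiv.swap (1 : Fin 3) 2) 0 = 0 := by decide
    have h1 : (Equiv.swap (1 : Fin 3) 2) 1 = 2 := by decide
    obtain ⟨ha, hb⟩ := hx
    simp only [h0, h1] at ha
    simp [F] at ha
    exact ha.symm
  -- σ = swap 0 1 : x = T2 (T2 x) and T3 x = T3 (T2 x) a.e.
  have h01 : ∀ᵐ x ∂μ, x = T2 (T2 x) ∧ T3 x = T3 (T2 x) := by
    filter_upwards [key (Equiv.swap 0 1)] with x hx
    have h0 : (Equiv.swap (0 : Fin 3) 1) 0 = 1 := by decide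
    have h1 : (Equiv.swap (0 : Fin 3) 1) 1 = 0 := by decide
    have h2 : (Equiv.swap (0 : Fin 3) 1) 2 = 2 := by decide
    obtain ⟨ha, hb⟩ := hx
    simp only [h0, h1, h2] at ha hb
    simp [F] at ha hb
    exact ⟨ha, hb⟩
  -- marginal: map T2 μ = μ
  have hmarg : Measure.map T2 μ = μ := by
    have e0 : Measure.map (fun v : Fin 3 → (Fin n → ℝ) => v 0) γ = μ := by
      rw [hγ, Measure.map_map (measurable_pi_apply 0) hFm]
      have : (fun v : Fin 3 → (Fin n → ℝ) => v 0) ∘ F = id := by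
        funext x; simp [F]
      rw [this, Measure.map_id]
    have e1 : Measure.map (fun v : Fin 3 → (Fin n → ℝ) => v 1) γ = Measure.map T2 μ := by
      rw [hγ, Measure.map_map (measurable_pi_apply 1) hFm]
      have : (fun v : Fin 3 → (Fin n → ℝ) => v 1) ∘ F = T2 := by funext x; simp [F]
      rw [this]
    calc Measure.map T2 μ = Measure.map (fun v : Fin 3 → (Fin n → ℝ) => v 1) γ := e1.symm
      _ = Measure.map (fun v : Fin 3 → (Fin n → ℝ) => v 0)
            (Measure.map (fun v i => v ((Equiv.swap 0 1 : Equiv.Perm (Fin 3)) i)) γ) := by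
          rw [Measure.map_map (measurable_pi_apply 0) (hpm _)]
          congr 1
      _ = μ := by rw [hsym, e0]
  -- transfer h23 along T2
  have h23' : ∀ᵐ x ∂μ, T2 (T2 x) = T3 (T2 x) := by
    have hE : MeasurableSet {x : Fin n → ℝ | T2 x = T3 x} := measurableSet_eq_fun hT2 hT3
    have : μ {x | T2 x = T3 x}ᶜ = 0 := by
      rw [ae_iff] at h23
      exact h23
    have : Measure.map T2 μ {x | T2 x = T3 x}ᶜ = 0 := by rw [hmarg]; exact this
    rw [Measure.map_apply hT2 hE.compl] at this
    rw [ae_iff]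
    exact this
  have main : ∀ᵐ x ∂μ, T2 x = x ∧ T3 x = x := by
    filter_upwards [h23, h01, h23'] with x e1 ⟨e2, e3⟩ e4
    have hT3x : T3 x = x := by rw [e3, ← e4, ← e2]
    exact ⟨e1.trans hT3x, hT3x⟩
  refine ⟨main, ?_⟩
  rw [hγ]
  apply Measure.map_congr
  filter_upwards [main] with x ⟨e1, e2⟩
  simp [F, e1, e2]
end

section
/- Let $\mu$ be an absolutely continuous probability measure on $\mathbb{R}^n$ ($n \geq 2$) and let $c(x_1,x_2,x_3) = \sum_{1 \le i < j \le 3} \frac{1}{|x_i - x_j|}$ be the three-marginal Coulomb cost. Then the minimization of $\int c\, d\gamma$ over permutation-symmetric $\gamma \in \Pi(\mu,\mu,\mu)$ cannot be attained by a measure concentrated on the graph of a map $(T_2,T_3)$ over the first variable, unless the infimum is $+\infty$. -/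
/-!
If `γ` is the law of `(x, T₂ x, T₃ x)` under `μ`, then `γ` lives on the graph
`{v | v 1 = T₂ (v 0) ∧ v 2 = T₃ (v 0)}`. Invariance under swapping the last two coordinates puts
`γ` also on `{v | v 2 = T₂ (v 0) ∧ v 1 = T₃ (v 0)}`, so `v 1 = v 2` for `γ`-a.e. `v`. There the
Coulomb cost is `∞`, so the cost of `γ` is `∞`, and by optimality so is the infimum.
-/

open MeasureTheory
open scoped ENNReal

/-- The three-marginal Coulomb cost `∑_{1 ≤ i < j ≤ 3} 1/|x_i - x_j|`,
with the convention `1/0 = ∞`. -/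
noncomputable def coulomb3 (n : ℕ) (x : Fin 3 → EuclideanSpace ℝ (Fin n)) : ℝ≥0∞ :=
  ∑ p ∈ Finset.univ.filter (fun p : Fin 3 × Fin 3 => p.1 < p.2),
    (ENNReal.ofReal (dist (x p.1) (x p.2)))⁻¹

section Graph

variable {X : Type*} [MeasurableSpace X] {T₂ T₃ : X → X}

theorem measurable_graph₃ (hT₂ : Measurable T₂) (hT₃ : Measurable T₃) :
    Measurable fun x => ![x, T₂ x, T₃ x] := by
  refine measurable_pi_iff.mpr fun i => ?_
  fin_cases i
  exacts [measurable_id, hT₂, hT₃]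

variable [MeasurableEq X]

theorem measurableSet_graph₃ (hT₂ : Measurable T₂) (hT₃ : Measurable T₃) :
    MeasurableSet {v : Fin 3 → X | v 1 = T₂ (v 0) ∧ v 2 = T₃ (v 0)} :=
  (measurableSet_eq_fun (measurable_pi_apply 1) (hT₂.comp (measurable_pi_apply 0))).inter
    (measurableSet_eq_fun (measurable_pi_apply 2) (hT₃.comp (measurable_pi_apply 0)))

theorem ae_mem_graph₃ (hT₂ : Measurable T₂) (hT₃ : Measurable T₃) (μ : Measure X) :
    ∀ᵐ v ∂μ.map (fun x => ![x, T₂ x, T₃ x]), v 1 = T₂ (v 0) ∧ v 2 = T₃ (v 0) :=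
  (ae_map_iff (measurable_graph₃ hT₂ hT₃).aemeasurable (measurableSet_graph₃ hT₂ hT₃)).mpr
    (.of_forall fun _ => ⟨rfl, rfl⟩)

theorem ae_apply_one_eq_apply_two_of_map_swap_eq (hT₂ : Measurable T₂) (hT₃ : Measurable T₃)
    {μ : Measure X} {γ : Measure (Fin 3 → X)} (hγ : γ = μ.map fun x => ![x, T₂ x, T₃ x])
    (hswap : γ.map (fun v i => v (Equiv.swap 1 2 i)) = γ) :
    ∀ᵐ v ∂γ, v 1 = v 2 := by
  have hgraph : ∀ᵐ v ∂γ, v 1 = T₂ (v 0) ∧ v 2 = T₃ (v 0) := hγ ▸ ae_mem_graph₃ hT₂ hT₃ μ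
  have hgraph_swap : ∀ᵐ v ∂γ, v 2 = T₂ (v 0) ∧ v 1 = T₃ (v 0) := by
    have hmeas : Measurable fun (v : Fin 3 → X) i => v (Equiv.swap 1 2 i) :=
      measurable_pi_iff.mpr fun i => measurable_pi_apply _
    rw [← hswap] at hgraph
    exact (ae_map_iff hmeas.aemeasurable (measurableSet_graph₃ hT₂ hT₃)).mp hgraph
  filter_upwards [hgraph, hgraph_swap] with v h h' using h.1.trans h'.1.symm

end Graph

theorem coulomb3_eq_top_of_apply_eq {n : ℕ} {x : Fin 3 → EuclideanSpace ℝ (Fin n)} {i j : Fin 3}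
    (hij : i < j) (h : x i = x j) : coulomb3 n x = ∞ :=
  ENNReal.sum_eq_top.mpr ⟨(i, j), by simpa using hij, by simp [h]⟩

theorem stmt8_general {n : ℕ}
    (μ : Measure (EuclideanSpace ℝ (Fin n))) [IsProbabilityMeasure μ]
    (T2 T3 : EuclideanSpace ℝ (Fin n) → EuclideanSpace ℝ (Fin n))
    (hT2 : Measurable T2) (hT3 : Measurable T3)
    (γ : Measure (Fin 3 → EuclideanSpace ℝ (Fin n)))
    (hγ : γ = Measure.map (fun x => ![x, T2 x, T3 x]) μ)
    (hsym : ∀ σ : Equiv.Perm (Fin 3), Measure.map (fun v i => v (σ i)) γ = γ)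
    (hopt : ∀ γ' : Measure (Fin 3 → EuclideanSpace ℝ (Fin n)),
      (∀ i, Measure.map (fun v => v i) γ' = μ) →
      (∀ σ : Equiv.Perm (Fin 3), Measure.map (fun v i => v (σ i)) γ' = γ') →
      ∫⁻ v, coulomb3 n v ∂γ ≤ ∫⁻ v, coulomb3 n v ∂γ') :
    ∫⁻ v, coulomb3 n v ∂γ = ∞ ∧
    sInf {e : ℝ≥0∞ | ∃ γ' : Measure (Fin 3 → EuclideanSpace ℝ (Fin n)),
      (∀ i, Measure.map (fun v => v i) γ' = μ) ∧
      (∀ σ : Equiv.Perm (Fin 3), Measure.map (fun v i => v (σ i)) γ' = γ') ∧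
      e = ∫⁻ v, coulomb3 n v ∂γ'} = ∞ := by
  have : IsProbabilityMeasure γ :=
    hγ ▸ Measure.isProbabilityMeasure_map (measurable_graph₃ hT2 hT3).aemeasurable
  have hcost : ∫⁻ v, coulomb3 n v ∂γ = ∞ := by
    have hdiag := ae_apply_one_eq_apply_two_of_map_swap_eq hT2 hT3 hγ (hsym _)
    rw [lintegral_congr_ae (hdiag.mono fun v hv => coulomb3_eq_top_of_apply_eq (by decide) hv)]
    simp
  refine ⟨hcost, eq_top_iff.mpr (le_sInf ?_)⟩
  rintro _ ⟨γ', hmarg', hsym', rfl⟩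
  exact hcost ▸ hopt γ' hmarg' hsym'

theorem stmt8 {n : ℕ} (hn : 2 ≤ n)
    (μ : Measure (EuclideanSpace ℝ (Fin n))) [IsProbabilityMeasure μ]
    (hac : μ ≪ volume)
    (T2 T3 : EuclideanSpace ℝ (Fin n) → EuclideanSpace ℝ (Fin n))
    (hT2 : Measurable T2) (hT3 : Measurable T3)
    (γ : Measure (Fin 3 → EuclideanSpace ℝ (Fin n)))
    (hγ : γ = Measure.map (fun x => ![x, T2 x, T3 x]) μ)
    (hmarg : ∀ i, Measure.map (fun v => v i) γ = μ)
    (hsym : ∀ σ : Equiv.Perm (Fin 3), Measure.map (fun v i => v (σ i)) γ = γ)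
    (hopt : ∀ γ' : Measure (Fin 3 → EuclideanSpace ℝ (Fin n)),
      (∀ i, Measure.map (fun v => v i) γ' = μ) →
      (∀ σ : Equiv.Perm (Fin 3), Measure.map (fun v i => v (σ i)) γ' = γ') →
      ∫⁻ v, coulomb3 n v ∂γ ≤ ∫⁻ v, coulomb3 n v ∂γ') :
    ∫⁻ v, coulomb3 n v ∂γ = ∞ ∧
    sInf {e : ℝ≥0∞ | ∃ γ' : Measure (Fin 3 → EuclideanSpace ℝ (Fin n)),
      (∀ i, Measure.map (fun v => v i) γ' = μ) ∧
      (∀ σ : Equiv.Perm (Fin 3), Measure.map (fun v i => v (σ i)) γ' = γ') ∧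
      e = ∫⁻ v, coulomb3 n v ∂γ'} = ∞ :=
  stmt8_general μ T2 T3 hT2 hT3 γ hγ hsym hopt
end
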